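/- Consider, for i = 1,…,n, the neutral high-order Hopfield difference system on ℤ: xᵢ(t) − xᵢ(t−1) = −cᵢ(t)·xᵢ(t − δᵢ(t)) + Σ_{j=1}^{n} a_{ij}(t)·f_j(x_j(t)) + Σ_{j=1}^{n} b_{ij}(t)·g_j(x_j(t − τ_{ij}(t))) + Σ_{j=1}^{n} d_{ij}(t)·Σ_{s=t−σ_{ij}(t)+1}^{t} h_j(x_j(s) − x_j(s−1)) + Σ_{j=1}^{n} Σ_{l=1}^{n} T_{ijl}(t)·k_j(x_j(t − ξ_{ijl}(t)))·k_l(x_l(t − ζ_{ijl}(t))) + Iᵢ(t). Assume: (H1) each cᵢ : ℤ → ℝ is almost periodic with cᵢ⁻ := inf_t cᵢ(t) > 0 and cᵢ⁺ := sup_t cᵢ(t); (H2) each a_{ij}, b_{ij}, d_{ij}, T_{ijl} : ℤ → ℝ is an almost periodic sequence with suprema of absolute values a_{ij}⁺ etc., each delay δᵢ, τ_{ij}, σ_{ij}, ξ_{ijl}, ζ_{ijl} : ℤ → ℕ is a bounded almost periodic sequence of nonnegative integers with suprema δᵢ⁺, τ_{ij}⁺, σ_{ij}⁺, ξ_{ijl}⁺,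 ζ_{ijl}⁺, and each Iᵢ : ℤ → ℝ is pseudo almost periodic with Iᵢ⁺ := sup_t |Iᵢ(t)|; (H3) f_j, g_j, h_j, k_j : ℝ → ℝ are Lipschitz with constants L_j^f, L_j^g, L_j^h, L_j^k and vanish at 0; (H4) there exists r > 0 such that, setting ρᵢ := (cᵢ⁺δᵢ⁺ + Σ_j a_{ij}⁺L_j^f + Σ_j b_{ij}⁺L_j^g + Σ_j d_{ij}⁺σ_{ij}⁺L_j^h + 2r·Σ_jΣ_l T_{ijl}⁺L_j^kL_l^k)·r, K₁ := max_i Iᵢ⁺/cᵢ⁻, K₂ := max_i ((cᵢ⁺+cᵢ⁻)/cᵢ⁻)·Iᵢ⁺, one has max_i max{ρᵢ/cᵢ⁻, ((cᵢ⁺+cᵢ⁻)/cᵢ⁻)·ρᵢ} + max{K₁, K₂} ≤ r and 0 < ρᵢ/r < cᵢ⁻/(cᵢ⁺+cᵢ⁻) < cᵢ⁻ for every i. Then the system has a solution x = (x₁,…,x_n) : ℤ → ℝⁿ such that each xᵢ and each backward difference ∇xᵢ(t) := xᵢ(t) − xᵢ(t−1) is pseudo almost periodic and sup_{t∈ℤ}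 max_i max{|xᵢ(t)|, |∇xᵢ(t)|} ≤ r; moreover, this solution is unique among all such solutions within this bound. -/

import Mathlib

/-- A sequence `g : ℤ → ℝ` is almost periodic if for every `ε > 0` there is a positive
integer `l` such that among any `l` consecutive integers there is a `τ` with
`|g (t + τ) - g t| < ε` for all `t`. -/
def APSequence (g : ℤ → ℝ) : Prop :=
  ∀ ε : ℝ, 0 < ε → ∃ l : ℕ, 0 < l ∧ ∀ a : ℤ,
    ∃ τ ∈ Finset.Icc a (a + l), ∀ t : ℤ, |g (t + τ) - g t| < ε

/-- `φ : ℤ → ℝ` belongs to `PAP₀(ℤ)` if it is bounded and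
`(1/(2r)) ∑_{s=-r}^{r} |φ s| → 0` as `r → ∞`. -/
def PAPZeroSeq (φ : ℤ → ℝ) : Prop :=
  (∃ C : ℝ, ∀ t : ℤ, |φ t| ≤ C) ∧
    Filter.Tendsto
      (fun r : ℕ => (1 / (2 * (r : ℝ))) * ∑ s ∈ Finset.Icc (-(r : ℤ)) (r : ℤ), |φ s|)
      Filter.atTop (nhds 0)

/-- `f : ℤ → ℝ` is pseudo almost periodic if `f = g + φ` with `g` an almost periodic
sequence and `φ ∈ PAP₀(ℤ)`. -/
def PseudoAPSeq (f : ℤ → ℝ) : Prop :=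
  ∃ g φ : ℤ → ℝ, APSequence g ∧ PAPZeroSeq φ ∧ f = g + φ

/-- The right-hand side of the neutral high-order Hopfield difference system on `ℤ`. -/
noncomputable def HopfieldRHSZ (n : ℕ) (c : Fin n → ℤ → ℝ) (δ : Fin n → ℤ → ℕ) (I : Fin n → ℤ → ℝ)
    (a b d : Fin n → Fin n → ℤ → ℝ) (τ σ : Fin n → Fin n → ℤ → ℕ)
    (T : Fin n → Fin n → Fin n → ℤ → ℝ) (ξ ζ : Fin n → Fin n → Fin n → ℤ → ℕ)
    (f g h k : Fin n → ℝ → ℝ)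
    (x : Fin n → ℤ → ℝ) (i : Fin n) (t : ℤ) : ℝ :=
  -(c i t) * x i (t - δ i t)
    + (∑ j, a i j t * f j (x j t))
    + (∑ j, b i j t * g j (x j (t - τ i j t)))
    + (∑ j, d i j t * ∑ s ∈ Finset.Icc (t - σ i j t + 1) t, h j (x j s - x j (s - 1)))
    + (∑ j, ∑ l, T i j l t * k j (x j (t - ξ i j l t)) * k l (x l (t - ζ i j l t)))
    + I i t

/-- `x : ℤ → ℝⁿ` is a pseudo almost periodic solution of the discrete neutral high-order
Hopfield system: each `xᵢ` and each backward difference `∇xᵢ(t) = xᵢ(t) - xᵢ(t-1)` is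
pseudo almost periodic, both are bounded by `r`, and the difference system holds. -/
def IsPAPSolutionZ (n : ℕ) (c : Fin n → ℤ → ℝ) (δ : Fin n → ℤ → ℕ) (I : Fin n → ℤ → ℝ)
    (a b d : Fin n → Fin n → ℤ → ℝ) (τ σ : Fin n → Fin n → ℤ → ℕ)
    (T : Fin n → Fin n → Fin n → ℤ → ℝ) (ξ ζ : Fin n → Fin n → Fin n → ℤ → ℕ)
    (f g h k : Fin n → ℝ → ℝ) (r : ℝ)
    (x : Fin n → ℤ → ℝ) : Prop :=
  (∀ i, PseudoAPSeq (x i) ∧ PseudoAPSeq (fun t => x i t - x i (t - 1))) ∧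
  (∀ i t, |x i t| ≤ r ∧ |x i t - x i (t - 1)| ≤ r) ∧
  (∀ i t, x i t - x i (t - 1) = HopfieldRHSZ n c δ I a b d τ σ T ξ ζ f g h k x i t)

/-! Writing the system as `(1 + cᵢ(t)) xᵢ(t) = xᵢ(t - 1) + Hᵢ(x)(t)`, its bounded solutions are
the fixed points of `Φ(x)ᵢ(t) = ∑_{m ≥ 0} (∏_{j ≤ m} (1 + cᵢ(t - j))⁻¹) Hᵢ(x)(t - m)`.
Pseudo almost periodic sequences form an algebra that is closed under Lipschitz maps,
translations, almost periodic delays and uniform limits (the last because the almost periodic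
part `g` of `g + φ` satisfies `sup |g| ≤ sup |g + φ|`), so `Φ` preserves pseudo almost periodicity
of `x` and of `∇x`. By (H4), `Φ` maps the ball of radius `r` into itself and contracts the
distance `sup max (|x - y|, |∇x - ∇y|)` by the factor `max_i max(1, cᵢ⁺ + cᵢ⁻) ρᵢ / (cᵢ⁻ r)`,
which is `< 1`; Banach's fixed point theorem gives existence and uniqueness. -/

open Finset Filter Topology

/-! ## Almost periodic sequences -/

theorem apSequence_const (C : ℝ) : APSequence (fun _ => C) :=
  fun ε hε => ⟨1, one_pos, fun a => ⟨a, by simp, fun t => by simpa using hε⟩⟩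

namespace APSequence

variable {g h : ℤ → ℝ}

theorem exists_near_translate (hg : APSequence g) {ε : ℝ} (hε : 0 < ε) :
    ∃ l : ℕ, ∀ u : ℤ, ∃ j ∈ Icc (0 : ℤ) l, ∀ t, |g (t + u) - g (t + j)| < ε := by
  obtain ⟨l, -, hl⟩ := hg ε hε
  refine ⟨l, fun u => ?_⟩
  obtain ⟨τ, hτ, hτε⟩ := hl (-u)
  refine ⟨u + τ, by simp only [mem_Icc] at hτ ⊢; omega, fun t => ?_⟩
  rw [abs_sub_comm, ← add_assoc]
  exact hτε (t + u)

/-- Every translate of `F i` by `u` is `ε / 2`-close to its translate by some `J i u ∈ [0, l i]`.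
If `J i u = J i s` for all `i`, then `u - s` is a common `ε`-almost period; choosing one `s` for
each of the finitely many values of `J · u` keeps `u - s` in a window of fixed length. -/
theorem exists_common_almost_period {ι : Type*} [Fintype ι] {F : ι → ℤ → ℝ}
    (hF : ∀ i, APSequence (F i)) {ε : ℝ} (hε : 0 < ε) :
    ∃ l : ℕ, 0 < l ∧ ∀ a : ℤ, ∃ τ ∈ Icc a (a + l), ∀ i t, |F i (t + τ) - F i t| < ε := by
  classical
  choose l hl using fun i => (hF i).exists_near_translate (half_pos hε)
  choose J hJ hJε using hl
  let label : ℤ → ι → ℤ := fun u i => J i u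
  let rep : (ι → ℤ) → ℤ := fun v => if h : ∃ s, label s = v then h.choose else 0
  have hrep : ∀ u, label (rep (label u)) = label u := fun u => by
    have h : ∃ s, label s = label u := ⟨u, rfl⟩
    simp only [rep, dif_pos h]
    exact h.choose_spec
  let L : ℕ := (Fintype.piFinset fun i => Icc (0 : ℤ) (l i)).sup fun v => (rep v).natAbs
  have hL : ∀ u, |rep (label u)| ≤ L := fun u => by
    rw [Int.abs_eq_natAbs, Nat.cast_le]
    exact le_sup (f := fun v => (rep v).natAbs) (Fintype.mem_piFinset.mpr fun i => hJ i u)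
  refine ⟨2 * L + 1, by omega, fun a => ?_⟩
  set s := rep (label (a + L))
  have hs := abs_le.mp (hL (a + L))
  refine ⟨a + L - s, by simp only [mem_Icc]; push_cast; constructor <;> linarith, fun i t => ?_⟩
  have h1 := hJε i (a + L) (t - s)
  have h2 := hJε i s (t - s)
  have hlab : J i s = J i (a + L) := congrFun (hrep (a + L)) i
  rw [hlab, show t - s + s = t by ring] at h2
  rw [show t + (a + L - s) = t - s + (a + L) by ring]
  calc |F i (t - s + (a + L)) - F i t|
      ≤ |F i (t - s + (a + L)) - F i (t - s + J i (a + L))|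
        + |F i (t - s + J i (a + L)) - F i t| := abs_sub_le _ _ _
    _ < ε / 2 + ε / 2 := add_lt_add h1 (by rwa [abs_sub_comm])
    _ = ε := add_halves ε

theorem of_common_almost_periods (hg : APSequence g) (hh : APSequence h) {G : ℤ → ℝ}
    (hG : ∀ ε > 0, ∃ δ > 0, ∀ τ, (∀ t, |g (t + τ) - g t| < δ) →
      (∀ t, |h (t + τ) - h t| < δ) → ∀ t, |G (t + τ) - G t| < ε) :
    APSequence G := fun ε hε => by
  obtain ⟨δ, hδ, hGδ⟩ := hG ε hε
  obtain ⟨l, hl, hτ⟩ := exists_common_almost_period (F := fun b : Bool => if b then g else h)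
    (fun b => by cases b <;> assumption) hδ
  exact ⟨l, hl, fun a => (hτ a).imp fun τ ⟨hmem, hgh⟩ =>
    ⟨hmem, hGδ τ (hgh true) (hgh false)⟩⟩

theorem bounded (hg : APSequence g) : ∃ C, ∀ t, |g t| ≤ C := by
  obtain ⟨l, hl⟩ := hg.exists_near_translate one_pos
  refine ⟨∑ j ∈ Icc (0 : ℤ) l, |g j| + 1, fun t => ?_⟩
  obtain ⟨j, hj, hjt⟩ := hl t
  have h1 := hjt 0
  simp only [zero_add] at h1
  have h2 : |g j| ≤ ∑ j ∈ Icc (0 : ℤ) l, |g j| :=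
    single_le_sum (f := fun j => |g j|) (fun _ _ => abs_nonneg _) hj
  linarith [abs_sub_abs_le_abs_sub (g t) (g j)]

theorem comp {F : ℝ → ℝ} (hF : UniformContinuous F) (hg : APSequence g) :
    APSequence (fun t => F (g t)) := fun ε hε => by
  obtain ⟨δ, hδ, hFδ⟩ := Metric.uniformContinuous_iff.mp hF ε hε
  obtain ⟨l, hl, hτ⟩ := hg δ hδ
  exact ⟨l, hl, fun a => (hτ a).imp fun τ ⟨hmem, h⟩ => ⟨hmem, fun t => hFδ (h t)⟩⟩

theorem comp_sub_const (hg : APSequence g) (m : ℤ) : APSequence (fun t => g (t - m)) :=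
  fun ε hε => by
    obtain ⟨l, hl, hτ⟩ := hg ε hε
    refine ⟨l, hl, fun a => (hτ a).imp fun τ ⟨hmem, h⟩ => ⟨hmem, fun t => ?_⟩⟩
    simpa only [sub_add_eq_add_sub] using h (t - m)

theorem add (hg : APSequence g) (hh : APSequence h) : APSequence (fun t => g t + h t) := by
  refine of_common_almost_periods hg hh fun ε hε => ⟨ε / 2, half_pos hε, fun τ h1 h2 t => ?_⟩
  calc |g (t + τ) + h (t + τ) - (g t + h t)| ≤ |g (t + τ) - g t| + |h (t + τ) - h t| := by
        rw [add_sub_add_comm]; exact abs_add_le _ _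
    _ < ε / 2 + ε / 2 := add_lt_add (h1 t) (h2 t)
    _ = ε := add_halves ε

theorem neg (hg : APSequence g) : APSequence (fun t => -g t) :=
  hg.comp (F := fun y : ℝ => -y) LipschitzWith.id.neg.uniformContinuous

theorem mul (hg : APSequence g) (hh : APSequence h) : APSequence (fun t => g t * h t) := by
  obtain ⟨Bg, hBg⟩ := hg.bounded
  obtain ⟨Bh, hBh⟩ := hh.bounded
  have hBg0 : 0 ≤ Bg := (abs_nonneg _).trans (hBg 0)
  have hBh0 : 0 ≤ Bh := (abs_nonneg _).trans (hBh 0)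
  refine of_common_almost_periods hg hh fun ε hε =>
    ⟨ε / (Bg + Bh + 1), by positivity, fun τ h1 h2 t => ?_⟩
  set δ := ε / (Bg + Bh + 1)
  calc |g (t + τ) * h (t + τ) - g t * h t|
      = |g (t + τ) * (h (t + τ) - h t) + h t * (g (t + τ) - g t)| := by ring_nf
    _ ≤ Bg * δ + Bh * δ := by
        refine (abs_add_le _ _).trans (add_le_add ?_ ?_) <;> rw [abs_mul]
        · exact mul_le_mul (hBg _) (h2 t).le (abs_nonneg _) hBg0
        · exact mul_le_mul (hBh _) (h1 t).le (abs_nonneg _) hBh0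
    _ < (Bg + Bh + 1) * δ := by nlinarith [show 0 < δ by positivity]
    _ = ε := mul_div_cancel₀ ε (by positivity)

theorem finset_prod {ι : Type*} (s : Finset ι) {F : ι → ℤ → ℝ}
    (hF : ∀ i ∈ s, APSequence (F i)) : APSequence (fun t => ∏ i ∈ s, F i t) := by
  rw [← Finset.prod_fn]
  exact Finset.prod_induction _ APSequence (fun _ _ => mul) (apSequence_const 1) hF

theorem of_forall_approx {G : ℤ → ℝ}
    (hG : ∀ η > 0, ∃ g, APSequence g ∧ ∀ t, |G t - g t| ≤ η) : APSequence G := fun ε hε => by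
  obtain ⟨g, hg, hGg⟩ := hG (ε / 4) (by positivity)
  obtain ⟨l, hl, hτ⟩ := hg (ε / 4) (by positivity)
  refine ⟨l, hl, fun a => (hτ a).imp fun τ ⟨hmem, h⟩ => ⟨hmem, fun t => ?_⟩⟩
  calc |G (t + τ) - G t|
      ≤ |G (t + τ) - g (t + τ)| + |g (t + τ) - g t| + |g t - G t| := by
        linarith [abs_sub_le (G (t + τ)) (g (t + τ)) (G t), abs_sub_le (g (t + τ)) (g t) (G t)]
    _ < ε := by linarith [hGg (t + τ), h t, abs_sub_comm (g t) (G t) ▸ hGg t]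

end APSequence

/-! ## The class `PAP₀(ℤ)` -/

noncomputable def absMean (φ : ℤ → ℝ) (r : ℕ) : ℝ :=
  1 / (2 * (r : ℝ)) * ∑ s ∈ Icc (-(r : ℤ)) r, |φ s|

theorem absMean_nonneg (φ : ℤ → ℝ) (r : ℕ) : 0 ≤ absMean φ r :=
  mul_nonneg (by positivity) (sum_nonneg fun _ _ => abs_nonneg _)

theorem card_Icc_neg_self (r : ℕ) : ((Icc (-(r : ℤ)) r).card : ℝ) = 2 * r + 1 := by
  rw [Int.card_Icc]
  norm_cast
  omega

theorem papZeroSeq_iff {φ : ℤ → ℝ} :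
    PAPZeroSeq φ ↔ (∃ C, ∀ t, |φ t| ≤ C) ∧ Tendsto (absMean φ) atTop (𝓝 0) := Iff.rfl

theorem papZeroSeq_zero : PAPZeroSeq 0 :=
  ⟨⟨0, by simp⟩, by simp⟩

namespace PAPZeroSeq

variable {φ ψ : ℤ → ℝ}

theorem tendsto_absMean (hφ : PAPZeroSeq φ) : Tendsto (absMean φ) atTop (𝓝 0) := hφ.2

theorem of_abs_le_mul (hφ : PAPZeroSeq φ) {C : ℝ} (h : ∀ t, |ψ t| ≤ C * |φ t|) :
    PAPZeroSeq ψ := by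
  obtain ⟨⟨B, hB⟩, hmean⟩ := papZeroSeq_iff.mp hφ
  refine papZeroSeq_iff.mpr ⟨⟨|C| * B, fun t => (h t).trans ?_⟩, ?_⟩
  · exact (le_abs_self C |> mul_le_mul_of_nonneg_right <| abs_nonneg _).trans
      (mul_le_mul_of_nonneg_left (hB t) (abs_nonneg C))
  refine squeeze_zero (absMean_nonneg ψ) (fun r => ?_) (by simpa using hmean.const_mul C)
  calc absMean ψ r ≤ 1 / (2 * (r : ℝ)) * ∑ s ∈ Icc (-(r : ℤ)) r, C * |φ s| :=
        mul_le_mul_of_nonneg_left (sum_le_sum fun t _ => h t) (by positivity)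
    _ = C * absMean φ r := by rw [absMean, ← mul_sum]; ring

theorem add (hφ : PAPZeroSeq φ) (hψ : PAPZeroSeq ψ) : PAPZeroSeq (fun t => φ t + ψ t) := by
  obtain ⟨⟨B, hB⟩, hmφ⟩ := papZeroSeq_iff.mp hφ
  obtain ⟨⟨B', hB'⟩, hmψ⟩ := papZeroSeq_iff.mp hψ
  refine papZeroSeq_iff.mpr
    ⟨⟨B + B', fun t => (abs_add_le _ _).trans (add_le_add (hB t) (hB' t))⟩, ?_⟩
  refine squeeze_zero (absMean_nonneg _) (fun r => ?_) (by simpa using hmφ.add hmψ)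
  rw [absMean, absMean, absMean, ← mul_add, ← sum_add_distrib]
  exact mul_le_mul_of_nonneg_left (sum_le_sum fun t _ => abs_add_le _ _) (by positivity)

theorem finset_sum {ι : Type*} (s : Finset ι) {F : ι → ℤ → ℝ}
    (hF : ∀ i ∈ s, PAPZeroSeq (F i)) : PAPZeroSeq (fun t => ∑ i ∈ s, F i t) := by
  rw [← Finset.sum_fn]
  exact Finset.sum_induction _ PAPZeroSeq (fun _ _ => add) papZeroSeq_zero hF

/-- The window `[-r, r]` shifted by `m` lies in `[-(r + |m|), r + |m|]`, whose length is
comparable to `2 r` once `r ≥ 1`. -/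
theorem comp_sub_const (hφ : PAPZeroSeq φ) (m : ℤ) : PAPZeroSeq (fun t => φ (t - m)) := by
  obtain ⟨⟨B, hB⟩, hmean⟩ := papZeroSeq_iff.mp hφ
  refine papZeroSeq_iff.mpr ⟨⟨B, fun t => hB _⟩, ?_⟩
  set K := m.natAbs
  have key : ∀ r : ℕ, 1 ≤ r →
      absMean (fun t => φ (t - m)) r ≤ (1 + K) * absMean φ (r + K) := by
    intro r hr
    have hsum : ∑ s ∈ Icc (-(r : ℤ)) r, |φ (s - m)|
        ≤ ∑ s ∈ Icc (-((r + K : ℕ) : ℤ)) (r + K : ℕ), |φ s| := by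
      rw [← sum_image (s := Icc (-(r : ℤ)) r) (g := fun s => s - m) (f := fun s => |φ s|)
        (fun _ _ _ _ h => sub_left_injective h)]
      refine sum_le_sum_of_subset_of_nonneg (fun s hs => ?_) fun _ _ _ => abs_nonneg _
      obtain ⟨u, hu, rfl⟩ := mem_image.mp hs
      simp only [mem_Icc] at hu ⊢
      omega
    have hr' : (1 : ℝ) ≤ r := by exact_mod_cast hr
    rw [absMean, absMean, ← mul_assoc]
    refine mul_le_mul ?_ hsum (sum_nonneg fun _ _ => abs_nonneg _) (by positivity)
    rw [div_le_iff₀ (by positivity)]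
    push_cast
    field_simp
    nlinarith
  refine squeeze_zero' (Eventually.of_forall fun r => absMean_nonneg _ r)
    (eventually_atTop.mpr ⟨1, key⟩) ?_
  simpa using (hmean.comp (tendsto_add_atTop_nat K)).const_mul (1 + (K : ℝ))

theorem exists_abs_lt (hφ : PAPZeroSeq φ) {ε : ℝ} (hε : 0 < ε) : ∃ t, |φ t| < ε := by
  by_contra! h
  obtain ⟨r, hr⟩ :=
    ((hφ.tendsto_absMean.eventually (gt_mem_nhds hε)).and (eventually_ge_atTop 1)).exists
  have hr' : (1 : ℝ) ≤ r := by exact_mod_cast hr.2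
  have : ε ≤ absMean φ r := by
    calc ε ≤ 1 / (2 * (r : ℝ)) * ((2 * r + 1) * ε) := by
          rw [← mul_assoc, one_div_mul_eq_div]
          exact le_mul_of_one_le_left hε.le (by rw [le_div_iff₀ (by positivity)]; linarith)
      _ ≤ absMean φ r := by
          rw [absMean, ← card_Icc_neg_self, ← nsmul_eq_mul, ← sum_const]
          exact mul_le_mul_of_nonneg_left (sum_le_sum fun t _ => h t) (by positivity)
  exact absurd hr.1 (not_lt.mpr this)

theorem of_forall_approx (hb : ∃ C, ∀ t, |φ t| ≤ C)
    (h : ∀ η > 0, ∃ ψ, PAPZeroSeq ψ ∧ ∀ t, |φ t - ψ t| ≤ η) : PAPZeroSeq φ := by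
  refine papZeroSeq_iff.mpr ⟨hb, Metric.tendsto_atTop.mpr fun ε hε => ?_⟩
  obtain ⟨ψ, hψ, hφψ⟩ := h (ε / 4) (by positivity)
  obtain ⟨N, hN⟩ := Metric.tendsto_atTop.mp hψ.tendsto_absMean (ε / 2) (by positivity)
  refine ⟨max N 1, fun r hr => ?_⟩
  have hr' : (1 : ℝ) ≤ r := by exact_mod_cast (le_max_right N 1).trans hr
  have hψr : absMean ψ r < ε / 2 := by
    have := hN r ((le_max_left N 1).trans hr)
    rwa [Real.dist_eq, sub_zero, abs_of_nonneg (absMean_nonneg ψ r)] at this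
  have hsum : ∑ s ∈ Icc (-(r : ℤ)) r, |φ s|
      ≤ ∑ s ∈ Icc (-(r : ℤ)) r, |ψ s| + (2 * r + 1) * (ε / 4) := by
    rw [← card_Icc_neg_self, ← nsmul_eq_mul, ← sum_const, ← sum_add_distrib]
    exact sum_le_sum fun s _ => by linarith [abs_sub_abs_le_abs_sub (φ s) (ψ s), hφψ s]
  have hle : absMean φ r ≤ absMean ψ r + (2 * r + 1) / (2 * r) * (ε / 4) := by
    rw [absMean, absMean]
    calc 1 / (2 * (r : ℝ)) * ∑ s ∈ Icc (-(r : ℤ)) r, |φ s|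
        ≤ 1 / (2 * (r : ℝ)) * (∑ s ∈ Icc (-(r : ℤ)) r, |ψ s| + (2 * r + 1) * (ε / 4)) :=
          mul_le_mul_of_nonneg_left hsum (by positivity)
      _ = _ := by ring
  have hfrac : (2 * (r : ℝ) + 1) / (2 * r) ≤ 3 / 2 := by
    rw [div_le_iff₀ (by positivity)]; linarith
  rw [Real.dist_eq, sub_zero, abs_of_nonneg (absMean_nonneg φ r)]
  nlinarith

end PAPZeroSeq

/-! ## Pseudo almost periodic sequences -/

theorem APSequence.pseudoAPSeq {g : ℤ → ℝ} (hg : APSequence g) : PseudoAPSeq g :=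
  ⟨g, 0, hg, papZeroSeq_zero, (add_zero g).symm⟩

/-- Every window `[s, s + l]` contains a translate `t + τ` of `t` by an `ε`-almost period of `g`,
where `|φ| ≥ |g t| - C - ε`; but the window sums `∑_{j ≤ l} |φ (s + j)|` are again in `PAP₀`,
hence somewhere small. -/
theorem APSequence.abs_le_of_abs_add_le {g φ : ℤ → ℝ} (hg : APSequence g) (hφ : PAPZeroSeq φ)
    {C : ℝ} (h : ∀ t, |g t + φ t| ≤ C) (t : ℤ) : |g t| ≤ C := by
  by_contra! ht
  set ε := (|g t| - C) / 2
  have hε : 0 < ε := div_pos (by linarith) two_pos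
  have hgt : |g t| = C + 2 * ε := by simp only [ε]; ring
  obtain ⟨l, -, hl⟩ := hg ε hε
  have hψ : PAPZeroSeq (fun s => ∑ j ∈ range (l + 1), |φ (s - (-(j : ℤ)))|) :=
    PAPZeroSeq.finset_sum _ fun j _ =>
      (hφ.comp_sub_const _).of_abs_le_mul (C := 1) fun s => by rw [abs_abs, one_mul]
  obtain ⟨s, hs⟩ := hψ.exists_abs_lt hε
  obtain ⟨τ, hτ, hτε⟩ := hl (s - t)
  simp only [mem_Icc] at hτ
  have hj : (t + τ - s).toNat ∈ range (l + 1) := by rw [mem_range]; omega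
  have hφε : |φ (t + τ)| ≤ ∑ j ∈ range (l + 1), |φ (s - (-(j : ℤ)))| := by
    refine le_trans (le_of_eq ?_) (single_le_sum (f := fun j : ℕ => |φ (s - (-(j : ℤ)))|)
      (fun _ _ => abs_nonneg _) hj)
    congr 2
    omega
  rw [abs_of_nonneg (sum_nonneg fun _ _ => abs_nonneg _)] at hs
  have hgτ : |g t| - |g (t + τ)| ≤ |g (t + τ) - g t| := by
    rw [abs_sub_comm]; exact abs_sub_abs_le_abs_sub _ _
  have hgφ : |g (t + τ)| ≤ |g (t + τ) + φ (t + τ)| + |φ (t + τ)| := by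
    simpa using abs_add_le (g (t + τ) + φ (t + τ)) (-φ (t + τ))
  linarith [hτε t, h (t + τ)]

theorem exists_abs_sub_le_of_abs_sub_le {u : ℕ → ℝ}
    (hu : ∀ m m', |u m - u m'| ≤ 1 / (m + 1) + 1 / (m' + 1)) :
    ∃ L, ∀ m, |L - u m| ≤ 1 / (m + 1) := by
  have he : Tendsto (fun m : ℕ => 1 / ((m : ℝ) + 1)) atTop (𝓝 0) :=
    tendsto_one_div_add_atTop_nhds_zero_nat
  have hanti : ∀ N m : ℕ, N ≤ m → 1 / ((m : ℝ) + 1) ≤ 1 / (N + 1) := fun N m hm => by gcongr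
  have hcauchy : CauchySeq u := cauchySeq_of_le_tendsto_0 (fun N => 2 * (1 / ((N : ℝ) + 1)))
    (fun m m' N hm hm' => by
      rw [Real.dist_eq]
      linarith [hu m m', hanti N m hm, hanti N m' hm'])
    (by simpa using he.const_mul 2)
  obtain ⟨L, hL⟩ := cauchySeq_tendsto_of_complete hcauchy
  exact ⟨L, fun m => le_of_tendsto_of_tendsto' (hL.sub_const (u m)).abs
    (by simpa using he.add_const (1 / ((m : ℝ) + 1))) fun j => hu j m⟩

namespace PseudoAPSeq

variable {x y : ℤ → ℝ}

theorem bounded (hx : PseudoAPSeq x) : ∃ C, ∀ t, |x t| ≤ C := by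
  obtain ⟨g, φ, hg, ⟨⟨B, hB⟩, -⟩, rfl⟩ := hx
  obtain ⟨A, hA⟩ := hg.bounded
  exact ⟨A + B, fun t => (abs_add_le _ _).trans (add_le_add (hA t) (hB t))⟩

theorem add (hx : PseudoAPSeq x) (hy : PseudoAPSeq y) : PseudoAPSeq (fun t => x t + y t) := by
  obtain ⟨g, φ, hg, hφ, rfl⟩ := hx
  obtain ⟨g', φ', hg', hφ', rfl⟩ := hy
  exact ⟨_, _, hg.add hg', hφ.add hφ', by ext t; simp only [Pi.add_apply]; ring⟩

theorem mul (hx : PseudoAPSeq x) (hy : PseudoAPSeq y) : PseudoAPSeq (fun t => x t * y t) := by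
  obtain ⟨By, hBy⟩ := hy.bounded
  obtain ⟨g, φ, hg, hφ, rfl⟩ := hx
  obtain ⟨g', φ', hg', hφ', rfl⟩ := hy
  obtain ⟨Bg, hBg⟩ := hg.bounded
  refine ⟨_, fun t => g t * φ' t + φ t * (g' t + φ' t), hg.mul hg',
    (hφ'.of_abs_le_mul (C := Bg) fun t => ?_).add (hφ.of_abs_le_mul (C := By) fun t => ?_),
    by ext t; simp; ring⟩
  · rw [abs_mul]; exact mul_le_mul_of_nonneg_right (hBg t) (abs_nonneg _)
  · rw [abs_mul, mul_comm]; exact mul_le_mul_of_nonneg_right (hBy t) (abs_nonneg _)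

theorem comp {F : ℝ → ℝ} {K : NNReal} (hF : LipschitzWith K F) (hx : PseudoAPSeq x) :
    PseudoAPSeq (fun t => F (x t)) := by
  obtain ⟨g, φ, hg, hφ, rfl⟩ := hx
  refine ⟨_, fun t => F (g t + φ t) - F (g t), hg.comp hF.uniformContinuous,
    hφ.of_abs_le_mul (C := K) fun t => ?_, by ext t; simp⟩
  simpa [Real.dist_eq] using hF.dist_le_mul (g t + φ t) (g t)

theorem neg (hx : PseudoAPSeq x) : PseudoAPSeq (fun t => -x t) :=
  hx.comp (F := fun y => -y) LipschitzWith.id.neg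

theorem sub (hx : PseudoAPSeq x) (hy : PseudoAPSeq y) : PseudoAPSeq (fun t => x t - y t) := by
  simpa only [sub_eq_add_neg] using hx.add hy.neg

theorem comp_sub_const (hx : PseudoAPSeq x) (m : ℤ) : PseudoAPSeq (fun t => x (t - m)) := by
  obtain ⟨g, φ, hg, hφ, rfl⟩ := hx
  exact ⟨_, _, hg.comp_sub_const m, hφ.comp_sub_const m, rfl⟩

theorem finset_sum {ι : Type*} (s : Finset ι) {F : ι → ℤ → ℝ}
    (hF : ∀ i ∈ s, PseudoAPSeq (F i)) : PseudoAPSeq (fun t => ∑ i ∈ s, F i t) := by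
  rw [← Finset.sum_fn]
  exact Finset.sum_induction _ PseudoAPSeq (fun _ _ => add)
    (apSequence_const 0).pseudoAPSeq hF

/-- The almost periodic parts of uniformly close pseudo almost periodic sequences are uniformly
close (by `APSequence.abs_le_of_abs_add_le`), so they converge uniformly. -/
theorem of_forall_approx {G : ℤ → ℝ}
    (hG : ∀ η > 0, ∃ x, PseudoAPSeq x ∧ ∀ t, |G t - x t| ≤ η) : PseudoAPSeq G := by
  set e : ℕ → ℝ := fun m => 1 / (m + 1)
  have he_le : ∀ η > 0, ∃ m, e m ≤ η := fun η hη =>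
    (exists_nat_one_div_lt hη).imp fun _ h => h.le
  choose x hx hGx using fun m : ℕ => hG (e m) (by positivity)
  choose g φ hg hφ hxgφ using hx
  simp only [hxgφ, Pi.add_apply] at hGx
  have hgg : ∀ m m' t, |g m t - g m' t| ≤ e m + e m' := fun m m' =>
    ((hg m).add (hg m').neg).abs_le_of_abs_add_le ((hφ m).add ((hφ m').of_abs_le_mul (C := 1)
      fun t => by rw [abs_neg, one_mul])) fun t => by
        rw [show g m t + -g m' t + (φ m t + -φ m' t)
          = (g m t + φ m t - G t) + (G t - (g m' t + φ m' t)) by ring]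
        exact (abs_add_le _ _).trans (add_le_add (abs_sub_comm (G t) _ ▸ hGx m t) (hGx m' t))
  choose gLim hlim using fun t => exists_abs_sub_le_of_abs_sub_le (hgg · · t)
  replace hlim : ∀ m t, |gLim t - g m t| ≤ e m := fun m t => hlim t m
  have hrest : ∀ m t, |(G t - gLim t) - φ m t| ≤ 2 * e m := fun m t => by
    rw [show G t - gLim t - φ m t = (G t - (g m t + φ m t)) + -(gLim t - g m t) by ring]
    linarith [abs_add_le (G t - (g m t + φ m t)) (-(gLim t - g m t)), abs_neg (gLim t - g m t),
      hGx m t, hlim m t]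
  refine ⟨gLim, fun t => G t - gLim t, APSequence.of_forall_approx fun η hη => ?_,
    PAPZeroSeq.of_forall_approx ?_ fun η hη => ?_, by ext t; simp⟩
  · obtain ⟨m, hm⟩ := he_le η hη
    exact ⟨g m, hg m, fun t => (hlim m t).trans hm⟩
  · obtain ⟨B, hB⟩ := (hφ 0).1
    exact ⟨2 * e 0 + B, fun t => by
      linarith [abs_sub_abs_le_abs_sub (G t - gLim t) (φ 0 t), hrest 0 t, hB t]⟩
  · obtain ⟨m, hm⟩ := he_le (η / 2) (half_pos hη)
    exact ⟨φ m, hφ m, fun t => by linarith [hrest m t]⟩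

end PseudoAPSeq

theorem lipschitzWith_hat (m : ℝ) : LipschitzWith 1 (fun y : ℝ => max 0 (1 - |y - m|)) := by
  refine LipschitzWith.const_max (LipschitzWith.of_dist_le_mul fun y y' => ?_) 0
  rw [Real.dist_eq, Real.dist_eq, NNReal.coe_one, one_mul,
    show 1 - |y - m| - (1 - |y' - m|) = |y' - m| - |y - m| by ring, abs_sub_comm y y']
  simpa using abs_abs_sub_abs_le_abs_sub (y' - m) (y - m)

theorem eq_sum_hat_mul (G : ℕ → ℝ) {k N : ℕ} (hk : k ≤ N) :
    G k = ∑ m ∈ range (N + 1), max 0 (1 - |(k : ℝ) - m|) * G m := by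
  rw [sum_eq_single k (fun m _ hmk => ?_) (fun h => absurd (mem_range.mpr (by omega)) h)]
  · simp
  · have h1 : (1 : ℝ) ≤ |(k : ℝ) - m| := by
      have h : (k : ℤ) - m ≠ 0 := by omega
      exact_mod_cast Int.one_le_abs h
    rw [max_eq_left (by linarith), zero_mul]

theorem PseudoAPSeq.comp_select {G : ℕ → ℤ → ℝ} {N : ℕ} (hG : ∀ m ≤ N, PseudoAPSeq (G m))
    {σ : ℤ → ℕ} (hσ : APSequence (fun t => (σ t : ℝ))) (hσN : ∀ t, σ t ≤ N) :
    PseudoAPSeq (fun t => G (σ t) t) := by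
  rw [show (fun t => G (σ t) t) = fun t => ∑ m ∈ range (N + 1),
      max 0 (1 - |(σ t : ℝ) - m|) * G m t from
    funext fun t => eq_sum_hat_mul (fun m => G m t) (hσN t)]
  exact PseudoAPSeq.finset_sum _ fun m hm =>
    (hσ.comp (lipschitzWith_hat m).uniformContinuous).pseudoAPSeq.mul
      (hG m (Nat.lt_succ_iff.mp (mem_range.mp hm)))

open scoped BoundedContinuousFunction in
theorem isClosed_setOf_pseudoAPSeq : IsClosed {u : ℤ →ᵇ ℝ | PseudoAPSeq u} :=
  isClosed_of_closure_subset fun u hu => PseudoAPSeq.of_forall_approx fun η hη => by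
    obtain ⟨v, hv, huv⟩ := Metric.mem_closure_iff.mp hu η hη
    exact ⟨v, hv, fun t => by
      rw [← Real.dist_eq]; exact (BoundedContinuousFunction.dist_coe_le_dist t).trans huv.le⟩

/-! ## The damped sum -/

noncomputable def dampingFactor (c : ℤ → ℝ) (t : ℤ) (m : ℕ) : ℝ :=
  ∏ j ∈ range (m + 1), (1 + c (t - j))⁻¹

/-- The bounded solution of `(1 + c t) y t = y (t - 1) + H t`, obtained by unrolling the
recursion into the past. -/
noncomputable def dampedSum (c H : ℤ → ℝ) (t : ℤ) : ℝ :=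
  ∑' m : ℕ, dampingFactor c t m * H (t - m)

theorem summable_geometric_succ_mul {cm : ℝ} (hcm : 0 < cm) (B : ℝ) :
    Summable fun m : ℕ => (1 + cm)⁻¹ ^ (m + 1) * B :=
  ((summable_nat_add_iff 1).mpr (summable_geometric_of_lt_one (by positivity)
    (inv_lt_one_of_one_lt₀ (by linarith)))).mul_right B

theorem tsum_geometric_succ_mul {cm : ℝ} (hcm : 0 < cm) (B : ℝ) :
    ∑' m : ℕ, (1 + cm)⁻¹ ^ (m + 1) * B = B / cm := by
  simp_rw [pow_succ', mul_assoc]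
  rw [tsum_mul_left, tsum_mul_right,
    tsum_geometric_of_lt_one (by positivity) (inv_lt_one_of_one_lt₀ (by linarith))]
  field_simp
  rw [add_sub_cancel_left]
  field_simp

theorem abs_tsum_le_of_abs_le_geometric {cm B : ℝ} (hcm : 0 < cm) {a : ℕ → ℝ}
    (ha : ∀ m, |a m| ≤ (1 + cm)⁻¹ ^ (m + 1) * B) : Summable a ∧ |∑' m, a m| ≤ B / cm := by
  have hs : Summable a := by
    apply (summable_geometric_succ_mul hcm B).of_norm_bounded
    exact ha
  refine ⟨hs, ?_⟩
  rw [← tsum_geometric_succ_mul hcm B]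
  calc |∑' m, a m| ≤ ∑' m, |a m| := by
        simpa only [Real.norm_eq_abs] using norm_tsum_le_tsum_norm hs.norm
    _ ≤ _ := hs.abs.tsum_le_tsum ha (summable_geometric_succ_mul hcm B)

section DampedSum

variable {c H : ℤ → ℝ} {cm B : ℝ}

theorem dampingFactor_nonneg (hcm : 0 < cm) (hc : ∀ t, cm ≤ c t) (t : ℤ) (m : ℕ) :
    0 ≤ dampingFactor c t m :=
  prod_nonneg fun j _ => inv_nonneg.mpr (by linarith [hc (t - j)])

theorem dampingFactor_le (hcm : 0 < cm) (hc : ∀ t, cm ≤ c t) (t : ℤ) (m : ℕ) :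
    dampingFactor c t m ≤ (1 + cm)⁻¹ ^ (m + 1) := by
  calc dampingFactor c t m ≤ ∏ _j ∈ range (m + 1), (1 + cm)⁻¹ :=
        prod_le_prod (fun j _ => inv_nonneg.mpr (by linarith [hc (t - j)]))
          fun j _ => inv_anti₀ (by linarith) (by linarith [hc (t - j)])
    _ = (1 + cm)⁻¹ ^ (m + 1) := by rw [prod_const, card_range]

theorem dampingFactor_succ (t : ℤ) (m : ℕ) :
    dampingFactor c t (m + 1) = (1 + c t)⁻¹ * dampingFactor c (t - 1) m := by
  rw [dampingFactor, prod_range_succ', dampingFactor, mul_comm]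
  push_cast
  simp only [sub_add_eq_sub_sub_swap, sub_zero]

theorem abs_dampingFactor_mul_le (hcm : 0 < cm) (hc : ∀ t, cm ≤ c t) (hH : ∀ t, |H t| ≤ B)
    (t : ℤ) (m : ℕ) : |dampingFactor c t m * H (t - m)| ≤ (1 + cm)⁻¹ ^ (m + 1) * B := by
  rw [abs_mul, abs_of_nonneg (dampingFactor_nonneg hcm hc t m)]
  exact mul_le_mul (dampingFactor_le hcm hc t m) (hH _) (abs_nonneg _) (by positivity)

theorem summable_dampedSum (hcm : 0 < cm) (hc : ∀ t, cm ≤ c t) (hH : ∀ t, |H t| ≤ B) (t : ℤ) :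
    Summable fun m : ℕ => dampingFactor c t m * H (t - m) :=
  (abs_tsum_le_of_abs_le_geometric hcm (abs_dampingFactor_mul_le hcm hc hH t)).1

theorem abs_dampedSum_le (hcm : 0 < cm) (hc : ∀ t, cm ≤ c t) (hH : ∀ t, |H t| ≤ B) (t : ℤ) :
    |dampedSum c H t| ≤ B / cm :=
  (abs_tsum_le_of_abs_le_geometric hcm (abs_dampingFactor_mul_le hcm hc hH t)).2

theorem dampedSum_rec (hcm : 0 < cm) (hc : ∀ t, cm ≤ c t) (hH : ∀ t, |H t| ≤ B) (t : ℤ) :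
    (1 + c t) * dampedSum c H t = dampedSum c H (t - 1) + H t := by
  have hct : 1 + c t ≠ 0 := by linarith [hc t]
  rw [dampedSum, (summable_dampedSum hcm hc hH t).tsum_eq_zero_add, dampedSum]
  simp_rw [dampingFactor_succ, mul_assoc, tsum_mul_left]
  simp only [dampingFactor, zero_add, range_one, prod_singleton, Nat.cast_zero, sub_zero,
    Nat.cast_add, Nat.cast_one, sub_add_eq_sub_sub_swap]
  field_simp
  ring

theorem dampedSum_sub {H' : ℤ → ℝ} {B' : ℝ} (hcm : 0 < cm) (hc : ∀ t, cm ≤ c t)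
    (hH : ∀ t, |H t| ≤ B) (hH' : ∀ t, |H' t| ≤ B') (t : ℤ) :
    dampedSum c (fun s => H s - H' s) t = dampedSum c H t - dampedSum c H' t := by
  rw [dampedSum, dampedSum, dampedSum,
    ← (summable_dampedSum hcm hc hH t).tsum_sub (summable_dampedSum hcm hc hH' t)]
  simp_rw [mul_sub]

theorem eq_zero_of_forall_one_add_mul_eq (hcm : 0 < cm) (hc : ∀ t, cm ≤ c t) {z : ℤ → ℝ}
    (hz : ∃ C, ∀ t, |z t| ≤ C) (hrec : ∀ t, (1 + c t) * z t = z (t - 1)) : z = 0 := by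
  obtain ⟨C, hC⟩ := hz
  have hq : (1 + cm)⁻¹ < 1 := inv_lt_one_of_one_lt₀ (by linarith)
  have hstep : ∀ t, |z t| ≤ (1 + cm)⁻¹ * |z (t - 1)| := fun t => by
    have h1 : 0 < 1 + c t := by linarith [hc t]
    rw [← hrec t, abs_mul, abs_of_pos h1, ← mul_assoc]
    exact le_mul_of_one_le_left (abs_nonneg _)
      (by rw [inv_mul_eq_div, one_le_div (by linarith)]; linarith [hc t])
  have hpow : ∀ m : ℕ, ∀ t, |z t| ≤ (1 + cm)⁻¹ ^ m * C := by
    intro m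
    induction m with
    | zero => simpa using hC
    | succ m ih =>
      intro t
      rw [pow_succ', mul_assoc]
      exact (hstep t).trans (mul_le_mul_of_nonneg_left (ih _) (by positivity))
  funext t
  have := ge_of_tendsto ((tendsto_pow_atTop_nhds_zero_of_lt_one (by positivity) hq).mul_const C)
    (Eventually.of_forall fun m => hpow m t)
  simpa using this

theorem eq_dampedSum_of_rec (hcm : 0 < cm) (hc : ∀ t, cm ≤ c t) (hH : ∀ t, |H t| ≤ B)
    {y : ℤ → ℝ} (hy : ∃ C, ∀ t, |y t| ≤ C) (hrec : ∀ t, (1 + c t) * y t = y (t - 1) + H t) :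
    y = dampedSum c H := by
  obtain ⟨C, hC⟩ := hy
  refine sub_eq_zero.mp (eq_zero_of_forall_one_add_mul_eq hcm hc ⟨C + B / cm, fun t => ?_⟩
    fun t => ?_)
  · exact (abs_sub _ _).trans (add_le_add (hC t) (abs_dampedSum_le hcm hc hH t))
  · simp only [Pi.sub_apply]
    linear_combination hrec t - dampedSum_rec hcm hc hH t

theorem abs_dampedSum_sub_pred_le {cp : ℝ} (hcm : 0 < cm) (hc : ∀ t, cm ≤ c t)
    (hcp : ∀ t, c t ≤ cp) (hH : ∀ t, |H t| ≤ B) (t : ℤ) :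
    |dampedSum c H t - dampedSum c H (t - 1)| ≤ (cp + cm) / cm * B := by
  have hB : 0 ≤ B := (abs_nonneg _).trans (hH 0)
  rw [show dampedSum c H t - dampedSum c H (t - 1) = H t - c t * dampedSum c H t by
    linear_combination dampedSum_rec hcm hc hH t]
  calc |H t - c t * dampedSum c H t| ≤ B + cp * (B / cm) := by
        refine (abs_sub _ _).trans (add_le_add (hH t) ?_)
        rw [abs_mul, abs_of_pos (hcm.trans_le (hc t))]
        exact mul_le_mul (hcp t) (abs_dampedSum_le hcm hc hH t) (abs_nonneg _)
          (hcm.le.trans ((hc t).trans (hcp t)))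
    _ = (cp + cm) / cm * B := by field_simp; ring

end DampedSum

theorem lipschitzWith_inv_one_add_max : LipschitzWith 1 (fun y : ℝ => (1 + max y 0)⁻¹) := by
  refine LipschitzWith.of_dist_le_mul fun y y' => ?_
  have ha : 1 ≤ 1 + max y 0 := le_add_of_nonneg_right (le_max_right _ _)
  have hb : 1 ≤ 1 + max y' 0 := le_add_of_nonneg_right (le_max_right _ _)
  rw [Real.dist_eq, Real.dist_eq, NNReal.coe_one, one_mul]
  calc |(1 + max y 0)⁻¹ - (1 + max y' 0)⁻¹|
      = |max y' 0 - max y 0| / ((1 + max y 0) * (1 + max y' 0)) := by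
        rw [inv_sub_inv (by positivity) (by positivity), abs_div,
          abs_of_pos (by positivity : (0 : ℝ) < (1 + max y 0) * (1 + max y' 0)),
          add_sub_add_left_eq_sub]
    _ ≤ |max y' 0 - max y 0| := div_le_self (abs_nonneg _) (one_le_mul_of_one_le_of_one_le ha hb)
    _ ≤ |y - y'| := abs_sub_comm y y' ▸ abs_max_sub_max_le_abs _ _ _

theorem APSequence.dampingFactor {c : ℤ → ℝ} {cm : ℝ} (hcm : 0 < cm) (hc : ∀ t, cm ≤ c t)
    (hcAP : APSequence c) (m : ℕ) : APSequence (fun t => _root_.dampingFactor c t m) := by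
  have : (fun t => _root_.dampingFactor c t m)
      = fun t => ∏ j ∈ range (m + 1), (1 + max (c (t - j)) 0)⁻¹ :=
    funext fun t => prod_congr rfl fun j _ => by rw [max_eq_left (hcm.le.trans (hc _))]
  rw [this]
  exact APSequence.finset_prod _ fun j _ =>
    (hcAP.comp_sub_const j).comp (F := fun y => (1 + max y 0)⁻¹)
      lipschitzWith_inv_one_add_max.uniformContinuous

/-- `dampedSum c H` is the uniform limit of its partial sums, whose tails are bounded by
`(1 + cm)⁻ᴺ B / cm`. -/
theorem PseudoAPSeq.dampedSum {c H : ℤ → ℝ} {cm : ℝ} (hcm : 0 < cm) (hc : ∀ t, cm ≤ c t)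
    (hcAP : APSequence c) (hH : PseudoAPSeq H) : PseudoAPSeq (_root_.dampedSum c H) := by
  obtain ⟨B, hB⟩ := hH.bounded
  have hq : (1 + cm)⁻¹ < 1 := inv_lt_one_of_one_lt₀ (by linarith)
  refine of_forall_approx fun η hη => ?_
  obtain ⟨N, hN⟩ := (((tendsto_pow_atTop_nhds_zero_of_lt_one (by positivity) hq).mul_const
    (B / cm)).eventually (ge_mem_nhds (by simpa using hη))).exists
  refine ⟨fun t => ∑ m ∈ range N, dampingFactor c t m * H (t - m),
    finset_sum _ fun m _ => (hcAP.dampingFactor hcm hc m).pseudoAPSeq.mul (hH.comp_sub_const m),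
    fun t => ?_⟩
  rw [_root_.dampedSum, ← (summable_dampedSum hcm hc hB t).sum_add_tsum_nat_add N,
    add_sub_cancel_left]
  refine ((abs_tsum_le_of_abs_le_geometric hcm fun m => ?_).2.trans_eq
    (mul_div_assoc _ _ _)).trans hN
  calc |dampingFactor c t (m + N) * H (t - (m + N : ℕ))|
      ≤ (1 + cm)⁻¹ ^ (m + N + 1) * B := abs_dampingFactor_mul_le hcm hc hB t (m + N)
    _ = (1 + cm)⁻¹ ^ (m + 1) * ((1 + cm)⁻¹ ^ N * B) := by ring

/-! ## Contraction on the pseudo almost periodic ball -/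

def papBall (n : ℕ) (r : ℝ) : Set (Fin n → ℤ → ℝ) :=
  {x | (∀ i, PseudoAPSeq (x i) ∧ PseudoAPSeq (fun t => x i t - x i (t - 1))) ∧
    ∀ i t, |x i t| ≤ r ∧ |x i t - x i (t - 1)| ≤ r}

def DistLEWithDiff {n : ℕ} (M : ℝ) (x y : Fin n → ℤ → ℝ) : Prop :=
  ∀ i t, |x i t - y i t| ≤ M ∧ |(x i t - x i (t - 1)) - (y i t - y i (t - 1))| ≤ M

theorem zero_mem_papBall (n : ℕ) {r : ℝ} (hr : 0 ≤ r) : (0 : Fin n → ℤ → ℝ) ∈ papBall n r :=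
  ⟨fun _ => by simpa using ⟨(apSequence_const 0).pseudoAPSeq, (apSequence_const 0).pseudoAPSeq⟩,
    fun _ _ => by simpa using hr⟩

namespace PAPBallEmbedding

open BoundedContinuousFunction

variable {n : ℕ} {r : ℝ}

/-- `papBall n r` is realised inside the complete space of pairs of bounded sequences as the
closed set of pairs `(x, ∇x)`; the sup distance there is the distance of `DistLEWithDiff`. -/
abbrev Pairs (n : ℕ) := (Fin n → ℤ →ᵇ ℝ) × (Fin n → ℤ →ᵇ ℝ)

def graph (n : ℕ) (r : ℝ) : Set (Pairs n) :=
  {p | (∀ i t, p.2 i t = p.1 i t - p.1 i (t - 1)) ∧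
    ∀ i, PseudoAPSeq (p.1 i) ∧ PseudoAPSeq (p.2 i) ∧ ∀ t, |p.1 i t| ≤ r ∧ |p.2 i t| ≤ r}

theorem isClosed_graph : IsClosed (graph n r) := by
  have hev : ∀ t, Continuous fun u : ℤ →ᵇ ℝ => u t := fun t => continuous_eval_const t
  simp only [graph, Set.ofPred_and, Set.ofPred_forall]
  refine (isClosed_iInter fun i => isClosed_iInter fun t => isClosed_eq ?_ ?_).inter
    (isClosed_iInter fun i => ?_)
  · exact (hev t).comp ((continuous_apply i).comp continuous_snd)
  · exact ((hev t).comp ((continuous_apply i).comp continuous_fst)).sub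
      ((hev (t - 1)).comp ((continuous_apply i).comp continuous_fst))
  have h1 : Continuous fun p : Pairs n => p.1 i := (continuous_apply i).comp continuous_fst
  have h2 : Continuous fun p : Pairs n => p.2 i := (continuous_apply i).comp continuous_snd
  refine (isClosed_setOf_pseudoAPSeq.preimage h1).inter
    ((isClosed_setOf_pseudoAPSeq.preimage h2).inter (isClosed_iInter fun t => ?_))
  exact (isClosed_le ((hev t).comp h1).abs continuous_const).inter
    (isClosed_le ((hev t).comp h2).abs continuous_const)

def toGraph (x : Fin n → ℤ → ℝ) (hx : x ∈ papBall n r) : graph n r :=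
  ⟨(fun i => ofNormedAddCommGroupDiscrete (x i) r fun t => (hx.2 i t).1,
    fun i => ofNormedAddCommGroupDiscrete (fun t => x i t - x i (t - 1)) r fun t => (hx.2 i t).2),
    fun _ _ => rfl, fun i => ⟨(hx.1 i).1, (hx.1 i).2, hx.2 i⟩⟩

def ofGraph (p : graph n r) : Fin n → ℤ → ℝ := fun i t => p.1.1 i t

theorem ofGraph_mem (p : graph n r) : ofGraph p ∈ papBall n r := by
  obtain ⟨p, hrel, hp⟩ := p
  have hdiff : ∀ i, (fun t => p.1 i t - p.1 i (t - 1)) = p.2 i := fun i =>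
    funext fun t => (hrel i t).symm
  exact ⟨fun i => ⟨(hp i).1, by simpa only [ofGraph, hdiff] using (hp i).2.1⟩,
    fun i t => ⟨((hp i).2.2 t).1, by simpa only [ofGraph, hrel] using ((hp i).2.2 t).2⟩⟩

theorem ofGraph_toGraph (x : Fin n → ℤ → ℝ) (hx : x ∈ papBall n r) : ofGraph (toGraph x hx) = x :=
  rfl

theorem distLEWithDiff_ofGraph (p q : graph n r) :
    DistLEWithDiff (dist p q) (ofGraph p) (ofGraph q) := by
  obtain ⟨p, hp⟩ := p
  obtain ⟨q, hq⟩ := q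
  intro i t
  rw [Subtype.dist_eq]
  have h1 : dist (p.1 i t) (q.1 i t) ≤ dist p q :=
    (dist_coe_le_dist t).trans ((dist_le_pi_dist p.1 q.1 i).trans
      (by rw [Prod.dist_eq]; exact le_max_left _ _))
  have h2 : dist (p.2 i t) (q.2 i t) ≤ dist p q :=
    (dist_coe_le_dist t).trans ((dist_le_pi_dist p.2 q.2 i).trans
      (by rw [Prod.dist_eq]; exact le_max_right _ _))
  rw [Real.dist_eq] at h1 h2
  simp only [ofGraph, ← hp.1, ← hq.1]
  exact ⟨h1, h2⟩

theorem dist_toGraph_le {x y : Fin n → ℤ → ℝ} (hx : x ∈ papBall n r) (hy : y ∈ papBall n r)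
    {M : ℝ} (hM : 0 ≤ M) (hxy : DistLEWithDiff M x y) : dist (toGraph x hx) (toGraph y hy) ≤ M := by
  rw [Subtype.dist_eq, Prod.dist_eq, max_le_iff, dist_pi_le_iff hM, dist_pi_le_iff hM]
  refine ⟨fun i => (dist_le hM).mpr fun t => ?_, fun i => (dist_le hM).mpr fun t => ?_⟩ <;>
    rw [Real.dist_eq]
  exacts [(hxy i t).1, (hxy i t).2]

theorem toGraph_congr {x y : Fin n → ℤ → ℝ} (hx : x ∈ papBall n r) (hy : y ∈ papBall n r)
    (h : x = y) : toGraph x hx = toGraph y hy := by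
  subst h; rfl

end PAPBallEmbedding

open PAPBallEmbedding in
theorem exists_unique_fixedPoint_papBall {n : ℕ} {r κ : ℝ} (hr : 0 ≤ r) (hκ0 : 0 ≤ κ)
    (hκ : κ < 1) {Φ : (Fin n → ℤ → ℝ) → Fin n → ℤ → ℝ}
    (hΦ : ∀ x ∈ papBall n r, Φ x ∈ papBall n r)
    (hlip : ∀ x ∈ papBall n r, ∀ y ∈ papBall n r, ∀ M, 0 ≤ M →
      DistLEWithDiff M x y → DistLEWithDiff (κ * M) (Φ x) (Φ y)) :
    ∃ x ∈ papBall n r, Φ x = x ∧ ∀ y ∈ papBall n r, Φ y = y → y = x := by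
  have := (isClosed_graph (n := n) (r := r)).completeSpace_coe
  have : Nonempty (graph n r) := ⟨toGraph 0 (zero_mem_papBall n hr)⟩
  let F : graph n r → graph n r := fun p => toGraph (Φ (ofGraph p)) (hΦ _ (ofGraph_mem p))
  have hF : ContractingWith κ.toNNReal F :=
    ⟨Real.toNNReal_lt_one.mpr hκ, LipschitzWith.of_dist_le' fun p q =>
      dist_toGraph_le _ _ (mul_nonneg hκ0 dist_nonneg)
        (hlip _ (ofGraph_mem p) _ (ofGraph_mem q) _ dist_nonneg (distLEWithDiff_ofGraph p q))⟩
  have hp : F (ContractingWith.fixedPoint F hF) = ContractingWith.fixedPoint F hF :=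
    hF.fixedPoint_isFixedPt
  refine ⟨_, ofGraph_mem (ContractingWith.fixedPoint F hF), congrArg ofGraph hp,
    fun y hy hΦy => ?_⟩
  have hfix : Function.IsFixedPt F (toGraph y hy) := toGraph_congr _ _ hΦy
  rw [← ofGraph_toGraph y hy, hF.fixedPoint_unique hfix]

section DampedSumFamily

variable {n : ℕ} {c : Fin n → ℤ → ℝ} {cm cp : Fin n → ℝ}

theorem dampedSum_mem_papBall (hcm : ∀ i, 0 < cm i) (hc : ∀ i t, cm i ≤ c i t)
    (hcp : ∀ i t, c i t ≤ cp i) (hcAP : ∀ i, APSequence (c i)) {H : Fin n → ℤ → ℝ}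
    (hH : ∀ i, PseudoAPSeq (H i)) {B : Fin n → ℝ} (hHB : ∀ i t, |H i t| ≤ B i) {r : ℝ}
    (hBr : ∀ i, max (B i / cm i) ((cp i + cm i) / cm i * B i) ≤ r) :
    (fun i => dampedSum (c i) (H i)) ∈ papBall n r := by
  refine ⟨fun i => ⟨(hH i).dampedSum (hcm i) (hc i) (hcAP i), ?_⟩, fun i t =>
    ⟨(abs_dampedSum_le (hcm i) (hc i) (hHB i) t).trans ((le_max_left _ _).trans (hBr i)),
      (abs_dampedSum_sub_pred_le (hcm i) (hc i) (hcp i) (hHB i) t).trans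
        ((le_max_right _ _).trans (hBr i))⟩⟩
  have hrec : ∀ t, dampedSum (c i) (H i) t - dampedSum (c i) (H i) (t - 1)
      = H i t - c i t * dampedSum (c i) (H i) t := fun t => by
    linear_combination dampedSum_rec (hcm i) (hc i) (hHB i) t
  simp only [hrec]
  exact (hH i).sub ((hcAP i).pseudoAPSeq.mul ((hH i).dampedSum (hcm i) (hc i) (hcAP i)))

theorem distLEWithDiff_dampedSum (hcm : ∀ i, 0 < cm i) (hc : ∀ i t, cm i ≤ c i t)
    (hcp : ∀ i t, c i t ≤ cp i) {H H' : Fin n → ℤ → ℝ} (hH : ∀ i, ∃ B, ∀ t, |H i t| ≤ B)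
    (hH' : ∀ i, ∃ B, ∀ t, |H' i t| ≤ B) {L : Fin n → ℝ} {κ M : ℝ} (hM : 0 ≤ M)
    (hHH' : ∀ i t, |H i t - H' i t| ≤ L i * M)
    (hL : ∀ i, max (L i / cm i) ((cp i + cm i) / cm i * L i) ≤ κ) :
    DistLEWithDiff (κ * M) (fun i => dampedSum (c i) (H i)) (fun i => dampedSum (c i) (H' i)) := by
  intro i t
  obtain ⟨B, hB⟩ := hH i
  obtain ⟨B', hB'⟩ := hH' i
  have hsub := dampedSum_sub (hcm i) (hc i) hB hB'
  simp only [sub_sub_sub_comm _ (dampedSum (c i) (H i) (t - 1)), ← hsub]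
  constructor
  · refine (abs_dampedSum_le (hcm i) (hc i) (hHH' i) t).trans ?_
    rw [mul_div_right_comm]
    exact mul_le_mul_of_nonneg_right ((le_max_left _ _).trans (hL i)) hM
  · refine (abs_dampedSum_sub_pred_le (hcm i) (hc i) (hcp i) (hHH' i) t).trans ?_
    rw [← mul_assoc]
    exact mul_le_mul_of_nonneg_right ((le_max_right _ _).trans (hL i)) hM

end DampedSumFamily

/-! ## The Hopfield system -/

theorem abs_sub_sub_nat_le {z : ℤ → ℝ} {M : ℝ} (hz : ∀ s, |z s - z (s - 1)| ≤ M) (t : ℤ)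
    (m : ℕ) : |z t - z (t - m)| ≤ m * M := by
  induction m with
  | zero => simp
  | succ m ih =>
    calc |z t - z (t - (m + 1 : ℕ))|
        ≤ |z t - z (t - m)| + |z (t - m) - z (t - m - 1)| := by
          rw [show t - ((m + 1 : ℕ) : ℤ) = t - m - 1 by push_cast; ring]
          exact abs_sub_le _ _ _
      _ ≤ m * M + M := add_le_add ih (hz _)
      _ = (m + 1 : ℕ) * M := by push_cast; ring

theorem sum_Icc_sub_add_one (z : ℤ → ℝ) (t : ℤ) (m : ℕ) :
    ∑ s ∈ Icc (t - m + 1) t, z s = ∑ j ∈ range m, z (t - j) := by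
  rw [← sum_image (g := fun j : ℕ => t - j) fun _ _ _ _ h => by simpa using h]
  congr 1
  ext s
  simp only [mem_Icc, mem_image, mem_range]
  constructor
  · intro hs
    exact ⟨(t - s).toNat, by omega, by omega⟩
  · rintro ⟨j, hj, rfl⟩
    omega

theorem abs_sum_Icc_sub_add_one_le {z : ℤ → ℝ} {M : ℝ} (hz : ∀ s, |z s| ≤ M) (t : ℤ) (m : ℕ) :
    |∑ s ∈ Icc (t - m + 1) t, z s| ≤ m * M := by
  rw [sum_Icc_sub_add_one]
  refine (abs_sum_le_sum_abs _ _).trans ?_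
  simpa using sum_le_sum fun j (_ : j ∈ range m) => hz (t - j)

theorem abs_sum_mul_le {ι : Type*} (s : Finset ι) {α β A B : ι → ℝ} (hα : ∀ j, |α j| ≤ A j)
    (hβ : ∀ j, |β j| ≤ B j) : |∑ j ∈ s, α j * β j| ≤ ∑ j ∈ s, A j * B j :=
  (abs_sum_le_sum_abs _ _).trans <| sum_le_sum fun j _ => by
    rw [abs_mul]
    exact mul_le_mul (hα j) (hβ j) (abs_nonneg _) ((abs_nonneg _).trans (hα j))

theorem abs_mul_sub_mul_le (p q p' q' : ℝ) :
    |p * q - p' * q'| ≤ |p - p'| * |q| + |p'| * |q - q'| := by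
  rw [← abs_mul, ← abs_mul, show p * q - p' * q' = (p - p') * q + p' * (q - q') by ring]
  exact abs_add_le _ _

theorem lipschitzWith_of_abs_sub_le {F : ℝ → ℝ} {L : ℝ} (hF : ∀ x y, |F x - F y| ≤ L * |x - y|) :
    LipschitzWith L.toNNReal F :=
  LipschitzWith.of_dist_le' fun x y => by simpa only [Real.dist_eq] using hF x y

theorem PseudoAPSeq.comp_sub_delay {x : ℤ → ℝ} (hx : PseudoAPSeq x) {σ : ℤ → ℕ} {N : ℕ}
    (hσ : APSequence (fun t => (σ t : ℝ))) (hσN : ∀ t, σ t ≤ N) :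
    PseudoAPSeq (fun t => x (t - σ t)) :=
  comp_select (G := fun m t => x (t - m)) (fun m _ => hx.comp_sub_const m) hσ hσN

theorem PseudoAPSeq.sum_Icc_sub_delay {x : ℤ → ℝ} (hx : PseudoAPSeq x) {σ : ℤ → ℕ} {N : ℕ}
    (hσ : APSequence (fun t => (σ t : ℝ))) (hσN : ∀ t, σ t ≤ N) :
    PseudoAPSeq (fun t => ∑ s ∈ Icc (t - σ t + 1) t, x s) := by
  refine comp_select (G := fun m t => ∑ s ∈ Icc (t - m + 1) t, x s) (fun m _ => ?_) hσ hσN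
  simp only [sum_Icc_sub_add_one]
  exact finset_sum _ fun j _ => hx.comp_sub_const j

theorem nonneg_of_abs_sub_le_mul {F : ℝ → ℝ} {L : ℝ} (hF : ∀ x y, |F x - F y| ≤ L * |x - y|) :
    0 ≤ L := by
  simpa using (abs_nonneg _).trans (hF 1 0)

theorem abs_sub_le_mul_of_abs_sub_le {F : ℝ → ℝ} {L : ℝ}
    (hF : ∀ x y, |F x - F y| ≤ L * |x - y|) {u v M : ℝ} (huv : |u - v| ≤ M) :
    |F u - F v| ≤ L * M :=
  (hF u v).trans (mul_le_mul_of_nonneg_left huv (nonneg_of_abs_sub_le_mul hF))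

theorem abs_le_mul_of_abs_sub_le {F : ℝ → ℝ} {L : ℝ} (hF : ∀ x y, |F x - F y| ≤ L * |x - y|)
    (hF0 : F 0 = 0) {u r : ℝ} (hu : |u| ≤ r) : |F u| ≤ L * r := by
  simpa only [hF0, sub_zero] using abs_sub_le_mul_of_abs_sub_le hF (v := 0) (by simpa using hu)

theorem abs_mul_sub_mul_le_of_abs_sub_le {F G : ℝ → ℝ} {LF LG : ℝ}
    (hF : ∀ x y, |F x - F y| ≤ LF * |x - y|) (hG : ∀ x y, |G x - G y| ≤ LG * |x - y|)
    (hF0 : F 0 = 0) (hG0 : G 0 = 0) {u u' v v' r M : ℝ} (hu' : |u'| ≤ r) (hv : |v| ≤ r)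
    (hu : |u - u'| ≤ M) (hv' : |v - v'| ≤ M) :
    |F u * G v - F u' * G v'| ≤ 2 * r * (LF * LG) * M := by
  have hLF := nonneg_of_abs_sub_le_mul hF
  calc |F u * G v - F u' * G v'| ≤ |F u - F u'| * |G v| + |F u'| * |G v - G v'| :=
        abs_mul_sub_mul_le _ _ _ _
    _ ≤ LF * M * (LG * r) + LF * r * (LG * M) := add_le_add
        (mul_le_mul (abs_sub_le_mul_of_abs_sub_le hF hu) (abs_le_mul_of_abs_sub_le hG hG0 hv)
          (abs_nonneg _) (mul_nonneg hLF ((abs_nonneg _).trans hu)))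
        (mul_le_mul (abs_le_mul_of_abs_sub_le hF hF0 hu') (abs_sub_le_mul_of_abs_sub_le hG hv')
          (abs_nonneg _) (mul_nonneg hLF ((abs_nonneg _).trans hu')))
    _ = 2 * r * (LF * LG) * M := by ring

theorem abs_add_add_add_add_le (a b c d e : ℝ) :
    |a + b + c + d + e| ≤ |a| + |b| + |c| + |d| + |e| := by
  linarith [abs_add_le (a + b + c + d) e, abs_add_le (a + b + c) d, abs_add_le (a + b) c,
    abs_add_le a b]

theorem max_div_mul_lt_one {L cm cp : ℝ} (hcm : 0 < cm) (hcp : 0 < cp + cm)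
    (hL : L < cm / (cp + cm)) (hcm' : cm / (cp + cm) < cm) :
    max (L / cm) ((cp + cm) / cm * L) < 1 := by
  refine max_lt ((div_lt_one hcm).mpr (hL.trans hcm')) ?_
  calc (cp + cm) / cm * L < (cp + cm) / cm * (cm / (cp + cm)) :=
        mul_lt_mul_of_pos_left hL (div_pos hcp hcm)
    _ = 1 := by field_simp

theorem Finite.exists_bound_lt_one {ι : Type*} [Finite ι] {u : ι → ℝ} (hu : ∀ i, u i < 1) :
    ∃ κ, 0 ≤ κ ∧ κ < 1 ∧ ∀ i, u i ≤ κ := by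
  rcases isEmpty_or_nonempty ι with hι | hι
  · exact ⟨0, le_rfl, one_pos, isEmptyElim⟩
  · obtain ⟨i₀, hi₀⟩ := Finite.exists_max u
    exact ⟨max (u i₀) 0, le_max_right _ _, max_lt (hu i₀) one_pos,
      fun i => (hi₀ i).trans (le_max_left _ _)⟩

section Hopfield

variable {n : ℕ} (c : Fin n → ℤ → ℝ) (δ : Fin n → ℤ → ℕ) (I : Fin n → ℤ → ℝ)
  (a b d : Fin n → Fin n → ℤ → ℝ) (τ σ : Fin n → Fin n → ℤ → ℕ)
  (T : Fin n → Fin n → Fin n → ℤ → ℝ) (ξ ζ : Fin n → Fin n → Fin n → ℤ → ℕ)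
  (f g h k : Fin n → ℝ → ℝ)

/-- Adding `c i t * x i t` to both sides of the system gives
`(1 + c i t) x i t = x i (t - 1) + hopfieldForcing … x i t`. -/
noncomputable def hopfieldForcing (x : Fin n → ℤ → ℝ) (i : Fin n) (t : ℤ) : ℝ :=
  c i t * x i t + HopfieldRHSZ n c δ I a b d τ σ T ξ ζ f g h k x i t

local notation "𝓗" => hopfieldForcing c δ I a b d τ σ T ξ ζ f g h k

theorem sub_pred_eq_hopfieldRHSZ_iff (x : Fin n → ℤ → ℝ) (i : Fin n) (t : ℤ) :
    x i t - x i (t - 1) = HopfieldRHSZ n c δ I a b d τ σ T ξ ζ f g h k x i t ↔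
      (1 + c i t) * x i t = x i (t - 1) + 𝓗 x i t := by
  rw [hopfieldForcing]
  constructor <;> intro e <;> linarith

theorem hopfieldForcing_sub (x y : Fin n → ℤ → ℝ) (i : Fin n) (t : ℤ) :
    𝓗 x i t - 𝓗 y i t =
      c i t * ((x i t - y i t) - (x i (t - δ i t) - y i (t - δ i t)))
      + ∑ j, a i j t * (f j (x j t) - f j (y j t))
      + ∑ j, b i j t * (g j (x j (t - τ i j t)) - g j (y j (t - τ i j t)))
      + ∑ j, d i j t * ∑ s ∈ Icc (t - σ i j t + 1) t,
          (h j (x j s - x j (s - 1)) - h j (y j s - y j (s - 1)))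
      + ∑ j, ∑ l, T i j l t * (k j (x j (t - ξ i j l t)) * k l (x l (t - ζ i j l t))
          - k j (y j (t - ξ i j l t)) * k l (y l (t - ζ i j l t))) := by
  simp only [hopfieldForcing, HopfieldRHSZ, mul_sub, mul_assoc, sum_sub_distrib]
  ring

variable {c δ I a b d τ σ T ξ ζ f g h k} in
theorem abs_hopfieldForcing_sub_le {cp : Fin n → ℝ} {δp : Fin n → ℕ}
    {ap bp dp : Fin n → Fin n → ℝ} {σp : Fin n → Fin n → ℕ} {Tp : Fin n → Fin n → Fin n → ℝ}
    {Lf Lg Lh Lk : Fin n → ℝ} (hcp : ∀ i t, |c i t| ≤ cp i) (hδp : ∀ i t, δ i t ≤ δp i)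
    (hap : ∀ i j t, |a i j t| ≤ ap i j) (hbp : ∀ i j t, |b i j t| ≤ bp i j)
    (hdp : ∀ i j t, |d i j t| ≤ dp i j) (hσp : ∀ i j t, σ i j t ≤ σp i j)
    (hTp : ∀ i j l t, |T i j l t| ≤ Tp i j l)
    (hLf : ∀ j u v, |f j u - f j v| ≤ Lf j * |u - v|)
    (hLg : ∀ j u v, |g j u - g j v| ≤ Lg j * |u - v|)
    (hLh : ∀ j u v, |h j u - h j v| ≤ Lh j * |u - v|)
    (hLk : ∀ j u v, |k j u - k j v| ≤ Lk j * |u - v|) (hk0 : ∀ j, k j 0 = 0)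
    {r M : ℝ} {x y : Fin n → ℤ → ℝ} (hx : ∀ j t, |x j t| ≤ r) (hy : ∀ j t, |y j t| ≤ r)
    (hxy : DistLEWithDiff M x y) (i : Fin n) (t : ℤ) :
    |𝓗 x i t - 𝓗 y i t| ≤ (cp i * δp i + ∑ j, ap i j * Lf j + ∑ j, bp i j * Lg j
      + ∑ j, dp i j * σp i j * Lh j + 2 * r * ∑ j, ∑ l, Tp i j l * Lk j * Lk l) * M := by
  have hM : 0 ≤ M := (abs_nonneg _).trans (hxy i t).1
  have h1 : |c i t * ((x i t - y i t) - (x i (t - δ i t) - y i (t - δ i t)))|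
      ≤ cp i * δp i * M := by
    rw [abs_mul, mul_assoc]
    refine mul_le_mul (hcp i t) ?_ (abs_nonneg _) ((abs_nonneg _).trans (hcp i t))
    refine (abs_sub_sub_nat_le (z := fun s => x i s - y i s) (fun s => ?_) t (δ i t)).trans
      (mul_le_mul_of_nonneg_right (by exact_mod_cast hδp i t) hM)
    simpa only [sub_sub_sub_comm] using (hxy i s).2
  have h2 : |∑ j, a i j t * (f j (x j t) - f j (y j t))| ≤ (∑ j, ap i j * Lf j) * M := by
    simp_rw [sum_mul, mul_assoc]
    exact abs_sum_mul_le _ (hap i · t) fun j => abs_sub_le_mul_of_abs_sub_le (hLf j) (hxy j t).1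
  have h3 : |∑ j, b i j t * (g j (x j (t - τ i j t)) - g j (y j (t - τ i j t)))|
      ≤ (∑ j, bp i j * Lg j) * M := by
    simp_rw [sum_mul, mul_assoc]
    exact abs_sum_mul_le _ (hbp i · t) fun j => abs_sub_le_mul_of_abs_sub_le (hLg j) (hxy j _).1
  have h4 : |∑ j, d i j t * ∑ s ∈ Icc (t - σ i j t + 1) t,
      (h j (x j s - x j (s - 1)) - h j (y j s - y j (s - 1)))|
      ≤ (∑ j, dp i j * σp i j * Lh j) * M := by
    simp_rw [sum_mul, mul_assoc]
    refine abs_sum_mul_le _ (hdp i · t) fun j => ?_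
    exact (abs_sum_Icc_sub_add_one_le (fun s => abs_sub_le_mul_of_abs_sub_le (hLh j) (hxy j s).2)
      t _).trans (mul_le_mul_of_nonneg_right (by exact_mod_cast hσp i j t)
        (mul_nonneg (nonneg_of_abs_sub_le_mul (hLh j)) hM))
  have h5 : |∑ j, ∑ l, T i j l t * (k j (x j (t - ξ i j l t)) * k l (x l (t - ζ i j l t))
      - k j (y j (t - ξ i j l t)) * k l (y l (t - ζ i j l t)))|
      ≤ 2 * r * (∑ j, ∑ l, Tp i j l * Lk j * Lk l) * M := by
    calc _ ≤ ∑ j, ∑ l, Tp i j l * (2 * r * (Lk j * Lk l) * M) :=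
          (abs_sum_le_sum_abs _ _).trans <| sum_le_sum fun j _ =>
            abs_sum_mul_le _ (hTp i j · t) fun l => abs_mul_sub_mul_le_of_abs_sub_le (hLk j)
              (hLk l) (hk0 j) (hk0 l) (hy j _) (hx l _) (hxy j _).1 (hxy l _).1
      _ = _ := by
          simp only [mul_sum, sum_mul]
          exact sum_congr rfl fun j _ => sum_congr rfl fun l _ => by ring
  rw [hopfieldForcing_sub]
  refine (abs_add_add_add_add_le _ _ _ _ _).trans ?_
  linarith

variable {c δ I a b d τ σ T ξ ζ f g h k} in
theorem hopfieldForcing_zero (hf0 : ∀ j, f j 0 = 0) (hg0 : ∀ j, g j 0 = 0)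
    (hh0 : ∀ j, h j 0 = 0) (hk0 : ∀ j, k j 0 = 0) (i : Fin n) (t : ℤ) : 𝓗 0 i t = I i t := by
  simp [hopfieldForcing, HopfieldRHSZ, hf0, hg0, hh0, hk0]

variable {c δ I a b d τ σ T ξ ζ f g h k} in
theorem PseudoAPSeq.hopfieldForcing {δp : Fin n → ℕ} {τp σp : Fin n → Fin n → ℕ}
    {ξp ζp : Fin n → Fin n → Fin n → ℕ}
    (hc : ∀ i, APSequence (c i)) (ha : ∀ i j, APSequence (a i j))
    (hb : ∀ i j, APSequence (b i j)) (hd : ∀ i j, APSequence (d i j))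
    (hT : ∀ i j l, APSequence (T i j l))
    (hδ : ∀ i, APSequence (fun t => (δ i t : ℝ))) (hδp : ∀ i t, δ i t ≤ δp i)
    (hτ : ∀ i j, APSequence (fun t => (τ i j t : ℝ))) (hτp : ∀ i j t, τ i j t ≤ τp i j)
    (hσ : ∀ i j, APSequence (fun t => (σ i j t : ℝ))) (hσp : ∀ i j t, σ i j t ≤ σp i j)
    (hξ : ∀ i j l, APSequence (fun t => (ξ i j l t : ℝ))) (hξp : ∀ i j l t, ξ i j l t ≤ ξp i j l)
    (hζ : ∀ i j l, APSequence (fun t => (ζ i j l t : ℝ))) (hζp : ∀ i j l t, ζ i j l t ≤ ζp i j l)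
    (hI : ∀ i, PseudoAPSeq (I i)) {Lf Lg Lh Lk : Fin n → ℝ}
    (hLf : ∀ j u v, |f j u - f j v| ≤ Lf j * |u - v|)
    (hLg : ∀ j u v, |g j u - g j v| ≤ Lg j * |u - v|)
    (hLh : ∀ j u v, |h j u - h j v| ≤ Lh j * |u - v|)
    (hLk : ∀ j u v, |k j u - k j v| ≤ Lk j * |u - v|) {x : Fin n → ℤ → ℝ}
    (hx : ∀ j, PseudoAPSeq (x j) ∧ PseudoAPSeq (fun t => x j t - x j (t - 1))) (i : Fin n) :
    PseudoAPSeq (𝓗 x i) := by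
  have hdelay : ∀ j {σ' : ℤ → ℕ} {N : ℕ}, APSequence (fun t => (σ' t : ℝ)) → (∀ t, σ' t ≤ N) →
      PseudoAPSeq (fun t => x j (t - σ' t)) := fun j => (hx j).1.comp_sub_delay
  refine ((hc i).pseudoAPSeq.mul (hx i).1).add
    (((((((hc i).neg.pseudoAPSeq.mul (hdelay i (hδ i) (hδp i))).add ?_).add ?_).add ?_).add ?_).add
      (hI i))
  · exact finset_sum _ fun j _ => (ha i j).pseudoAPSeq.mul
      ((hx j).1.comp (lipschitzWith_of_abs_sub_le (hLf j)))
  · exact finset_sum _ fun j _ => (hb i j).pseudoAPSeq.mul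
      ((hdelay j (hτ i j) (hτp i j)).comp (lipschitzWith_of_abs_sub_le (hLg j)))
  · exact finset_sum _ fun j _ => (hd i j).pseudoAPSeq.mul
      (((hx j).2.comp (lipschitzWith_of_abs_sub_le (hLh j))).sum_Icc_sub_delay (hσ i j) (hσp i j))
  · exact finset_sum _ fun j _ => finset_sum _ fun l _ => ((hT i j l).pseudoAPSeq.mul
      ((hdelay j (hξ i j l) (hξp i j l)).comp (lipschitzWith_of_abs_sub_le (hLk j)))).mul
      ((hdelay l (hζ i j l) (hζp i j l)).comp (lipschitzWith_of_abs_sub_le (hLk l)))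

variable {c δ I a b d τ σ T ξ ζ f g h k} in
theorem forall_sub_pred_eq_hopfieldRHSZ_iff {cm : Fin n → ℝ} (hcm : ∀ i, 0 < cm i)
    (hc : ∀ i t, cm i ≤ c i t) {x : Fin n → ℤ → ℝ} (hx : ∀ i, ∃ C, ∀ t, |x i t| ≤ C)
    (hH : ∀ i, ∃ B, ∀ t, |𝓗 x i t| ≤ B) :
    (∀ i t, x i t - x i (t - 1) = HopfieldRHSZ n c δ I a b d τ σ T ξ ζ f g h k x i t) ↔
      (fun i => dampedSum (c i) (𝓗 x i)) = x := by
  simp only [sub_pred_eq_hopfieldRHSZ_iff]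
  refine ⟨fun hrec => funext fun i => ?_, fun hfix i t => ?_⟩ <;> obtain ⟨B, hB⟩ := hH i
  · exact (eq_dampedSum_of_rec (hcm i) (hc i) hB (hx i) (hrec i)).symm
  · simpa only [congrFun hfix i] using dampedSum_rec (hcm i) (hc i) hB t

variable {c δ I a b d τ σ T ξ ζ f g h k} in
theorem isPAPSolutionZ_iff {cm : Fin n → ℝ} (hcm : ∀ i, 0 < cm i) (hc : ∀ i t, cm i ≤ c i t)
    {r : ℝ} {x : Fin n → ℤ → ℝ} (hx : x ∈ papBall n r) (hH : ∀ i, ∃ B, ∀ t, |𝓗 x i t| ≤ B) :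
    IsPAPSolutionZ n c δ I a b d τ σ T ξ ζ f g h k r x ↔
      (fun i => dampedSum (c i) (𝓗 x i)) = x :=
  (and_assoc.symm.trans (and_iff_right hx)).trans
    (forall_sub_pred_eq_hopfieldRHSZ_iff hcm hc (fun i => ⟨r, fun t => (hx.2 i t).1⟩) hH)

end Hopfield

theorem stmt16_general (n : ℕ)
    (c : Fin n → ℤ → ℝ) (δ : Fin n → ℤ → ℕ) (I : Fin n → ℤ → ℝ)
    (a b d : Fin n → Fin n → ℤ → ℝ) (τ σ : Fin n → Fin n → ℤ → ℕ)
    (T : Fin n → Fin n → Fin n → ℤ → ℝ) (ξ ζ : Fin n → Fin n → Fin n → ℤ → ℕ)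
    (f g h k : Fin n → ℝ → ℝ)
    (cm cp Ip : Fin n → ℝ) (δp : Fin n → ℕ)
    (ap bp dp : Fin n → Fin n → ℝ) (τp σp : Fin n → Fin n → ℕ)
    (Tp : Fin n → Fin n → Fin n → ℝ) (ξp ζp : Fin n → Fin n → Fin n → ℕ)
    (Lf Lg Lh Lk : Fin n → ℝ)
    (ρ : Fin n → ℝ) (r : ℝ)
    -- (H1)
    (hc : ∀ i, APSequence (c i))
    (hcm : ∀ i, IsGLB (Set.range (c i)) (cm i)) (hcm0 : ∀ i, 0 < cm i)
    (hcp : ∀ i, IsLUB (Set.range (c i)) (cp i))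
    -- (H2)
    (ha : ∀ i j, APSequence (a i j))
    (hap : ∀ i j, IsLUB (Set.range fun t => |a i j t|) (ap i j))
    (hb : ∀ i j, APSequence (b i j))
    (hbp : ∀ i j, IsLUB (Set.range fun t => |b i j t|) (bp i j))
    (hd : ∀ i j, APSequence (d i j))
    (hdp : ∀ i j, IsLUB (Set.range fun t => |d i j t|) (dp i j))
    (hT : ∀ i j l, APSequence (T i j l))
    (hTp : ∀ i j l, IsLUB (Set.range fun t => |T i j l t|) (Tp i j l))
    (hδ : ∀ i, APSequence (fun t => (δ i t : ℝ)))
    (hδp : ∀ i, IsLUB (Set.range (δ i)) (δp i))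
    (hτ : ∀ i j, APSequence (fun t => (τ i j t : ℝ)))
    (hτp : ∀ i j, IsLUB (Set.range (τ i j)) (τp i j))
    (hσ : ∀ i j, APSequence (fun t => (σ i j t : ℝ)))
    (hσp : ∀ i j, IsLUB (Set.range (σ i j)) (σp i j))
    (hξ : ∀ i j l, APSequence (fun t => (ξ i j l t : ℝ)))
    (hξp : ∀ i j l, IsLUB (Set.range (ξ i j l)) (ξp i j l))
    (hζ : ∀ i j l, APSequence (fun t => (ζ i j l t : ℝ)))
    (hζp : ∀ i j l, IsLUB (Set.range (ζ i j l)) (ζp i j l))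
    (hI : ∀ i, PseudoAPSeq (I i))
    (hIp : ∀ i, IsLUB (Set.range fun t => |I i t|) (Ip i))
    -- (H3)
    (hLipf : ∀ j (x y : ℝ), |f j x - f j y| ≤ Lf j * |x - y|)
    (hf0 : ∀ j, f j 0 = 0)
    (hLipg : ∀ j (x y : ℝ), |g j x - g j y| ≤ Lg j * |x - y|)
    (hg0 : ∀ j, g j 0 = 0)
    (hLiph : ∀ j (x y : ℝ), |h j x - h j y| ≤ Lh j * |x - y|)
    (hh0 : ∀ j, h j 0 = 0)
    (hLipk : ∀ j (x y : ℝ), |k j x - k j y| ≤ Lk j * |x - y|)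
    (hk0 : ∀ j, k j 0 = 0)
    -- (H4)
    (hr : 0 < r)
    (hρ : ∀ i, ρ i =
      (cp i * (δp i : ℝ) + (∑ j, ap i j * Lf j) + (∑ j, bp i j * Lg j)
        + (∑ j, dp i j * (σp i j : ℝ) * Lh j)
        + 2 * r * ∑ j, ∑ l, Tp i j l * Lk j * Lk l) * r)
    (hH4a : ∀ i j l : Fin n,
      max (ρ i / cm i) ((cp i + cm i) / cm i * ρ i)
        + max (Ip j / cm j) ((cp l + cm l) / cm l * Ip l) ≤ r)
    (hH4b : ∀ i, 0 < ρ i / r ∧ ρ i / r < cm i / (cp i + cm i)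
        ∧ cm i / (cp i + cm i) < cm i)
    :
    ∃ x : Fin n → ℤ → ℝ,
      IsPAPSolutionZ n c δ I a b d τ σ T ξ ζ f g h k r x ∧
      ∀ y : Fin n → ℤ → ℝ,
        IsPAPSolutionZ n c δ I a b d τ σ T ξ ζ f g h k r y → y = x := by
  have hcm_le : ∀ i t, cm i ≤ c i t := fun i t => (hcm i).1 ⟨t, rfl⟩
  have hc_le : ∀ i t, c i t ≤ cp i := fun i t => (hcp i).1 ⟨t, rfl⟩
  set H := hopfieldForcing c δ I a b d τ σ T ξ ζ f g h k
  have hHlip : ∀ x y M, (∀ j t, |x j t| ≤ r) → (∀ j t, |y j t| ≤ r) →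
      DistLEWithDiff M x y → ∀ i t, |H x i t - H y i t| ≤ ρ i / r * M := by
    intro x y M hx hy hxy i t
    rw [hρ i, mul_div_assoc, div_self hr.ne', mul_one]
    exact abs_hopfieldForcing_sub_le
      (fun i t => (abs_of_pos ((hcm0 i).trans_le (hcm_le i t))).trans_le (hc_le i t))
      (fun i t => (hδp i).1 ⟨t, rfl⟩) (fun i j t => (hap i j).1 ⟨t, rfl⟩)
      (fun i j t => (hbp i j).1 ⟨t, rfl⟩) (fun i j t => (hdp i j).1 ⟨t, rfl⟩)
      (fun i j t => (hσp i j).1 ⟨t, rfl⟩) (fun i j l t => (hTp i j l).1 ⟨t, rfl⟩)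
      hLipf hLipg hLiph hLipk hk0 hx hy hxy i t
  have hHball : ∀ x ∈ papBall n r, ∀ i t, |H x i t| ≤ ρ i + Ip i := by
    intro x hx i t
    have := hHlip x 0 r (fun j t => (hx.2 j t).1) (fun _ _ => by simpa using hr.le)
      (fun j t => by simpa using hx.2 j t) i t
    rw [show H 0 i t = I i t from hopfieldForcing_zero hf0 hg0 hh0 hk0 i t,
      div_mul_cancel₀ _ hr.ne'] at this
    linarith [abs_sub_abs_le_abs_sub (H x i t) (I i t), (hIp i).1 ⟨t, rfl⟩]
  have hmaps : ∀ x ∈ papBall n r, (fun i => dampedSum (c i) (H x i)) ∈ papBall n r :=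
    fun x hx => dampedSum_mem_papBall hcm0 hcm_le hc_le hc
      (PseudoAPSeq.hopfieldForcing hc ha hb hd hT hδ (fun i t => (hδp i).1 ⟨t, rfl⟩)
        hτ (fun i j t => (hτp i j).1 ⟨t, rfl⟩) hσ (fun i j t => (hσp i j).1 ⟨t, rfl⟩)
        hξ (fun i j l t => (hξp i j l).1 ⟨t, rfl⟩) hζ (fun i j l t => (hζp i j l).1 ⟨t, rfl⟩)
        hI hLipf hLipg hLiph hLipk hx.1)
      (hHball x hx) fun i => by
        rw [add_div, mul_add]
        exact max_add_add_le_max_add_max.trans (hH4a i i i)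
  obtain ⟨κ, hκ0, hκ1, hκ⟩ := Finite.exists_bound_lt_one
    (u := fun i => max (ρ i / r / cm i) ((cp i + cm i) / cm i * (ρ i / r))) fun i =>
      max_div_mul_lt_one (hcm0 i) (by linarith [hcm_le i 0, hc_le i 0, hcm0 i])
        (hH4b i).2.1 (hH4b i).2.2
  have hbdd : ∀ x ∈ papBall n r, ∀ i, ∃ B, ∀ t, |H x i t| ≤ B := fun x hx i => ⟨_, hHball x hx i⟩
  obtain ⟨x, hx, hfix, huniq⟩ := exists_unique_fixedPoint_papBall hr.le hκ0 hκ1 hmaps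
    fun x hx y hy M hM hxy => distLEWithDiff_dampedSum hcm0 hcm_le hc_le (hbdd x hx) (hbdd y hy)
      hM (hHlip x y M (fun j t => (hx.2 j t).1) (fun j t => (hy.2 j t).1) hxy) hκ
  refine ⟨x, (isPAPSolutionZ_iff hcm0 hcm_le hx (hbdd x hx)).mpr hfix, fun y hy => ?_⟩
  have hy' : y ∈ papBall n r := ⟨hy.1, hy.2.1⟩
  exact huniq y hy' ((isPAPSolutionZ_iff hcm0 hcm_le hy' (hbdd y hy')).mp hy)

/-- Discrete-time case of the paper's main existence theorem: under
hypotheses (H1)–(H4), the neutral high-order Hopfield difference system on `ℤ` has a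
unique pseudo almost periodic solution `x` with
`sup_t max_i max {|xᵢ(t)|, |∇xᵢ(t)|} ≤ r`. -/
theorem stmt16 (n : ℕ)
    (c : Fin n → ℤ → ℝ) (δ : Fin n → ℤ → ℕ) (I : Fin n → ℤ → ℝ)
    (a b d : Fin n → Fin n → ℤ → ℝ) (τ σ : Fin n → Fin n → ℤ → ℕ)
    (T : Fin n → Fin n → Fin n → ℤ → ℝ) (ξ ζ : Fin n → Fin n → Fin n → ℤ → ℕ)
    (f g h k : Fin n → ℝ → ℝ)
    (cm cp Ip : Fin n → ℝ) (δp : Fin n → ℕ)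
    (ap bp dp : Fin n → Fin n → ℝ) (τp σp : Fin n → Fin n → ℕ)
    (Tp : Fin n → Fin n → Fin n → ℝ) (ξp ζp : Fin n → Fin n → Fin n → ℕ)
    (Lf Lg Lh Lk : Fin n → ℝ)
    (ρ : Fin n → ℝ) (r : ℝ)
    -- (H1)
    (hc : ∀ i, APSequence (c i))
    (hcm : ∀ i, IsGLB (Set.range (c i)) (cm i)) (hcm0 : ∀ i, 0 < cm i)
    (hcp : ∀ i, IsLUB (Set.range (c i)) (cp i))
    -- (H2)
    (ha : ∀ i j, APSequence (a i j))
    (hap : ∀ i j, IsLUB (Set.range fun t => |a i j t|) (ap i j))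
    (hb : ∀ i j, APSequence (b i j))
    (hbp : ∀ i j, IsLUB (Set.range fun t => |b i j t|) (bp i j))
    (hd : ∀ i j, APSequence (d i j))
    (hdp : ∀ i j, IsLUB (Set.range fun t => |d i j t|) (dp i j))
    (hT : ∀ i j l, APSequence (T i j l))
    (hTp : ∀ i j l, IsLUB (Set.range fun t => |T i j l t|) (Tp i j l))
    (hδ : ∀ i, APSequence (fun t => (δ i t : ℝ)))
    (hδp : ∀ i, IsLUB (Set.range (δ i)) (δp i))
    (hτ : ∀ i j, APSequence (fun t => (τ i j t : ℝ)))
    (hτp : ∀ i j, IsLUB (Set.range (τ i j)) (τp i j))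
    (hσ : ∀ i j, APSequence (fun t => (σ i j t : ℝ)))
    (hσp : ∀ i j, IsLUB (Set.range (σ i j)) (σp i j))
    (hξ : ∀ i j l, APSequence (fun t => (ξ i j l t : ℝ)))
    (hξp : ∀ i j l, IsLUB (Set.range (ξ i j l)) (ξp i j l))
    (hζ : ∀ i j l, APSequence (fun t => (ζ i j l t : ℝ)))
    (hζp : ∀ i j l, IsLUB (Set.range (ζ i j l)) (ζp i j l))
    (hI : ∀ i, PseudoAPSeq (I i))
    (hIp : ∀ i, IsLUB (Set.range fun t => |I i t|) (Ip i))
    -- (H3)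
    (hLf : ∀ j, 0 ≤ Lf j) (hLipf : ∀ j (x y : ℝ), |f j x - f j y| ≤ Lf j * |x - y|)
    (hf0 : ∀ j, f j 0 = 0)
    (hLg : ∀ j, 0 ≤ Lg j) (hLipg : ∀ j (x y : ℝ), |g j x - g j y| ≤ Lg j * |x - y|)
    (hg0 : ∀ j, g j 0 = 0)
    (hLh : ∀ j, 0 ≤ Lh j) (hLiph : ∀ j (x y : ℝ), |h j x - h j y| ≤ Lh j * |x - y|)
    (hh0 : ∀ j, h j 0 = 0)
    (hLk : ∀ j, 0 ≤ Lk j) (hLipk : ∀ j (x y : ℝ), |k j x - k j y| ≤ Lk j * |x - y|)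
    (hk0 : ∀ j, k j 0 = 0)
    -- (H4)
    (hr : 0 < r)
    (hρ : ∀ i, ρ i =
      (cp i * (δp i : ℝ) + (∑ j, ap i j * Lf j) + (∑ j, bp i j * Lg j)
        + (∑ j, dp i j * (σp i j : ℝ) * Lh j)
        + 2 * r * ∑ j, ∑ l, Tp i j l * Lk j * Lk l) * r)
    (hH4a : ∀ i j l : Fin n,
      max (ρ i / cm i) ((cp i + cm i) / cm i * ρ i)
        + max (Ip j / cm j) ((cp l + cm l) / cm l * Ip l) ≤ r)
    (hH4b : ∀ i, 0 < ρ i / r ∧ ρ i / r < cm i / (cp i + cm i)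
        ∧ cm i / (cp i + cm i) < cm i)
    :
    ∃ x : Fin n → ℤ → ℝ,
      IsPAPSolutionZ n c δ I a b d τ σ T ξ ζ f g h k r x ∧
      ∀ y : Fin n → ℤ → ℝ,
        IsPAPSolutionZ n c δ I a b d τ σ T ξ ζ f g h k r y → y = x :=
  stmt16_general n c δ I a b d τ σ T ξ ζ f g h k cm cp Ip δp ap bp dp τp σp Tp ξp ζp Lf Lg Lh Lk ρ r
    hc hcm hcm0 hcp ha hap hb hbp hd hdp hT hTp hδ hδp hτ hτp hσ hσp hξ hξp hζ hζp hI hIp hLipf hf0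
    hLipg hg0 hLiph hh0 hLipk hk0 hr hρ hH4a hH4b
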